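/- Let k be a field and let H be the k-algebra k⟨s,w⟩/(s² + s, w² − 1), the quotient of the free k-algebra on two generators s, w by the two-sided ideal generated by s² + s and w² − 1. Then the k-algebra homomorphism ρ: H → M₂(k[X]) determined by ρ(s) = [[0,0],[0,−1]] and ρ(w) = [[X, X²−1],[−1, −X]] is injective, and the center of the image of ρ equals the set of scalar matrices {p·I₂ : p ∈ k[X]}; in particular the center of H is isomorphic as a k-algebra to the polynomial ring k[X]. -/
import Mathlib


/-!
STATEMENT 13: Let `H = k⟨s,w⟩/(s² + s, w² − 1)`.  The `k`-algebra homomorphism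
`ρ : H → M₂(k[X])` with `ρ(s) = [[0,0],[0,−1]]` and `ρ(w) = [[X, X²−1],[−1, −X]]`
is injective, the center of the image of `ρ` is exactly the set of scalar matrices
`{p·I₂ : p ∈ k[X]}`, and the center of `H` is isomorphic as a `k`-algebra to `k[X]`.
-/

universe u

open FreeAlgebra Polynomial

/-- The relations `s² = -s` and `w² = 1` (generator `0` is `s`, generator `1` is `w`);
quotienting the free algebra by these is the same as quotienting by the two-sided
ideal generated by `s² + s` and `w² − 1`. -/
inductive HRel (k : Type u) [Field k] :
    FreeAlgebra k (Fin 2) → FreeAlgebra k (Fin 2) → Prop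
  | s_sq : HRel k (ι k 0 * ι k 0) (-(ι k 0))
  | w_sq : HRel k (ι k 1 * ι k 1) 1

/-- The `k`-algebra `H = k⟨s,w⟩/(s² + s, w² − 1)`. -/
abbrev Halg (k : Type u) [Field k] : Type u := RingQuot (HRel k)

variable (k : Type u) [Field k]

/-- The element `s ∈ H`. -/
noncomputable def sH : Halg k := RingQuot.mkAlgHom k (HRel k) (ι k 0)

/-- The element `w ∈ H`. -/
noncomputable def wH : Halg k := RingQuot.mkAlgHom k (HRel k) (ι k 1)


section Aux

/-- `S = ρ(s)`. -/
noncomputable def SM : Matrix (Fin 2) (Fin 2) (Polynomial k) := !![0, 0; 0, -1]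
/-- `W = ρ(w)`. -/
noncomputable def WM : Matrix (Fin 2) (Fin 2) (Polynomial k) := !![(X : Polynomial k), X ^ 2 - 1; -1, -X]

variable {k}

lemma SM_mul_SM : SM k * SM k = -(SM k) := by
  ext i j : 2
  fin_cases i <;> fin_cases j <;> simp [SM, Matrix.mul_apply, Fin.sum_univ_two]

lemma WM_mul_WM : WM k * WM k = 1 := by
  rw [WM, Matrix.mul_fin_two, Matrix.one_fin_two]; congr 1 <;> ring

lemma SM_mul_WM : SM k * WM k = !![0, 0; 1, (X : Polynomial k)] := by
  rw [SM, WM, Matrix.mul_fin_two]; congr 1 <;> ring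

lemma WM_mul_SM : WM k * SM k = !![0, 1 - X ^ 2; 0, (X : Polynomial k)] := by
  rw [SM, WM, Matrix.mul_fin_two]; congr 1 <;> ring

lemma WSW_eq : WM k * SM k * WM k = !![X ^ 2 - 1, X ^ 3 - X; -X, -X ^ 2] := by
  rw [WM_mul_SM, WM, Matrix.mul_fin_two]; congr 1 <;> ring

lemma SW_mul_S : (SM k * WM k) * SM k = (X : Polynomial k) • SM k := by
  ext i j : 2
  fin_cases i <;> fin_cases j <;>
    simp [SM, WM, Matrix.mul_apply, Fin.sum_univ_two] <;> ring

lemma SW_mul_SW : (SM k * WM k) * (SM k * WM k) = (X : Polynomial k) • (SM k * WM k) := by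
  ext i j : 2
  fin_cases i <;> fin_cases j <;>
    simp [SM, WM, Matrix.mul_apply, Fin.sum_univ_two] <;> ring

lemma WS_mul_WS : (WM k * SM k) * (WM k * SM k) = (X : Polynomial k) • (WM k * SM k) := by
  ext i j : 2
  fin_cases i <;> fin_cases j <;>
    simp [SM, WM, Matrix.mul_apply, Fin.sum_univ_two] <;> ring

lemma WS_mul_WSW : (WM k * SM k) * (WM k * SM k * WM k) = (X : Polynomial k) • (WM k * SM k * WM k) := by
  rw [show WM k * SM k * (WM k * SM k * WM k) = ((WM k * SM k) * (WM k * SM k)) * WM k by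
    noncomm_ring, WS_mul_WS, Matrix.smul_mul]

lemma W_add_SW_add_WS : WM k + SM k * WM k + WM k * SM k = (X : Polynomial k) • 1 := by
  ext i j : 2
  fin_cases i <;> fin_cases j <;>
    simp [SM, WM, Matrix.mul_apply, Fin.sum_univ_two, Matrix.one_apply] <;> ring

end Aux

section Generic

variable {R : Type*} {A : Type*} [CommRing R] [Ring A] [Algebra R A]

/-- If `g * x = y * g` then `g * p(x) = p(y) * g`. -/
lemma comm_aeval {g x y : A} (h : g * x = y * g) (p : R[X]) :
    g * aeval x p = aeval y p * g := by
  induction p using Polynomial.induction_on' with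
  | add f q hf hq => rw [map_add, map_add, mul_add, add_mul, hf, hq]
  | monomial n a =>
      rw [aeval_monomial, aeval_monomial]
      have : SemiconjBy g (x ^ n) (y ^ n) := SemiconjBy.pow_right h n
      have hc : g * algebraMap R A a = algebraMap R A a * g := (Algebra.commutes a g).symm
      calc g * (algebraMap R A a * x ^ n) = algebraMap R A a * (g * x ^ n) := by
            rw [← mul_assoc, hc, mul_assoc]
        _ = algebraMap R A a * (y ^ n * g) := by rw [this]
        _ = algebraMap R A a * y ^ n * g := by rw [mul_assoc]

lemma aeval_comm_self (x : A) (p : R[X]) : aeval x p * x = x * aeval x p := by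
  have h1 : aeval x p * x = aeval x (p * X) := by rw [map_mul, aeval_X]
  have h2 : x * aeval x p = aeval x (X * p) := by rw [map_mul, aeval_X]
  rw [h1, h2, mul_comm]

/-- Evaluation lemma: if `M * B = X • B` then `p(M) * B = p • B`. -/
lemma aeval_mul_eq_smul {A : Type*} [Ring A] [Algebra R A] [Algebra R[X] A]
    [IsScalarTower R R[X] A] {M B : A} (h : M * B = (X : R[X]) • B) (p : R[X]) :
    aeval M p * B = p • B := by
  have key : ∀ n : ℕ, M ^ n * B = ((X : R[X]) ^ n) • B := by
    intro n
    induction n with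
    | zero => simp
    | succ n ih =>
        rw [pow_succ, mul_assoc, h, mul_smul_comm, ih, smul_smul, ← pow_succ']
  induction p using Polynomial.induction_on' with
  | add f q hf hq => rw [map_add, add_mul, hf, hq, add_smul]
  | monomial n a =>
      rw [aeval_monomial, mul_assoc, key, ← Polynomial.C_mul_X_pow_eq_monomial, mul_smul,
        ← Polynomial.algebraMap_eq, algebraMap_smul, ← Algebra.smul_def]

end Generic

section Rho

variable {k}

noncomputable def rho : Halg k →ₐ[k] Matrix (Fin 2) (Fin 2) (Polynomial k) :=
  RingQuot.liftAlgHom k ⟨FreeAlgebra.lift k ![SM k, WM k], by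
    rintro x y ⟨⟩ <;>
      simp only [map_mul, map_neg, map_one, FreeAlgebra.lift_ι_apply, Matrix.cons_val_zero,
        Matrix.cons_val_one, Matrix.head_cons]
    · exact SM_mul_SM
    · exact WM_mul_WM⟩

lemma rho_sH : rho (sH k) = SM k := by
  rw [sH, rho, RingQuot.liftAlgHom_mkAlgHom_apply, FreeAlgebra.lift_ι_apply]
  rfl

lemma rho_wH : rho (wH k) = WM k := by
  rw [wH, rho, RingQuot.liftAlgHom_mkAlgHom_apply, FreeAlgebra.lift_ι_apply]
  rfl

lemma sH_mul_sH : sH k * sH k = -(sH k) := by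
  rw [sH, ← map_mul, RingQuot.mkAlgHom_rel k HRel.s_sq, map_neg]

lemma wH_mul_wH : wH k * wH k = 1 := by
  rw [wH, ← map_mul, RingQuot.mkAlgHom_rel k HRel.w_sq, map_one]

end Rho

section Span

variable {k}

/-- Left multiplication by `s` negates words starting with `s`. -/
lemma s_mul_pow_mul {c : Halg k} (hc : sH k * c = -c) (n : ℕ) :
    sH k * ((sH k * wH k) ^ n * c) = -((sH k * wH k) ^ n * c) := by
  cases n with
  | zero => simpa using hc
  | succ n =>
      have h1 : sH k * ((sH k * wH k) ^ (n + 1) * c)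
          = sH k * sH k * wH k * ((sH k * wH k) ^ n * c) := by
        rw [pow_succ']; noncomm_ring
      rw [h1, sH_mul_sH, pow_succ']
      noncomm_ring
      exact smul_mul_assoc (-1) _ _

lemma s_mul_aeval_mul {c : Halg k} (hc : sH k * c = -c) (p : k[X]) :
    sH k * (aeval (sH k * wH k) p * c) = -(aeval (sH k * wH k) p * c) := by
  induction p using Polynomial.induction_on' with
  | add f q hf hq => rw [map_add, add_mul, mul_add, hf, hq, neg_add]
  | monomial n a =>
      rw [aeval_monomial, mul_assoc]
      have hc2 := s_mul_pow_mul hc n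
      calc sH k * (algebraMap k (Halg k) a * ((sH k * wH k) ^ n * c))
          = algebraMap k (Halg k) a * (sH k * ((sH k * wH k) ^ n * c)) := by
            rw [← mul_assoc, ← Algebra.commutes a (sH k), mul_assoc]
        _ = -(algebraMap k (Halg k) a * ((sH k * wH k) ^ n * c)) := by
            rw [hc2]
            exact mul_neg (algebraMap k (Halg k) a) ((sH k * wH k) ^ n * c)

/-- `w * p(sw) = p(ws) * w`. -/
lemma w_mul_aeval (p : k[X]) :
    wH k * aeval (sH k * wH k) p = aeval (wH k * sH k) p * wH k :=
  comm_aeval (by rw [← mul_assoc]) p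

/-- `s * p(ws) = p(sw) * s`. -/
lemma s_mul_aeval (p : k[X]) :
    sH k * aeval (wH k * sH k) p = aeval (sH k * wH k) p * sH k :=
  comm_aeval (by rw [← mul_assoc]) p

end Span

section Decomp

variable {k}

noncomputable def tA (p : k[X]) : Halg k := aeval (sH k * wH k) p * sH k
noncomputable def tB (p : k[X]) : Halg k := aeval (sH k * wH k) p * (sH k * wH k)
noncomputable def tC (p : k[X]) : Halg k := aeval (wH k * sH k) p * (wH k * sH k)
noncomputable def tD (p : k[X]) : Halg k := aeval (wH k * sH k) p * (wH k * sH k * wH k)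

def Decomp (x : Halg k) : Prop :=
  ∃ a b : k, ∃ p q r u : k[X],
    x = a • 1 + b • wH k + tA p + tB q + tC r + tD u

lemma decomp_one : Decomp (1 : Halg k) :=
  ⟨1, 0, 0, 0, 0, 0, by simp [tA, tB, tC, tD]⟩

lemma tA_add (p q : k[X]) : tA (p + q) = tA p + tA q := by rw [tA, map_add, add_mul]; rfl
lemma tB_add (p q : k[X]) : tB (p + q) = tB p + tB q := by rw [tB, map_add, add_mul]; rfl
lemma tC_add (p q : k[X]) : tC (p + q) = tC p + tC q := by rw [tC, map_add, add_mul]; rfl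
lemma tD_add (p q : k[X]) : tD (p + q) = tD p + tD q := by rw [tD, map_add, add_mul]; rfl

lemma tA_smul (c : k) (p : k[X]) : tA (c • p) = c • tA p := by
  rw [tA, map_smul, smul_mul_assoc]; rfl
lemma tB_smul (c : k) (p : k[X]) : tB (c • p) = c • tB p := by
  rw [tB, map_smul, smul_mul_assoc]; rfl
lemma tC_smul (c : k) (p : k[X]) : tC (c • p) = c • tC p := by
  rw [tC, map_smul, smul_mul_assoc]; rfl
lemma tD_smul (c : k) (p : k[X]) : tD (c • p) = c • tD p := by
  rw [tD, map_smul, smul_mul_assoc]; rfl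

lemma decomp_add {x y : Halg k} (hx : Decomp x) (hy : Decomp y) : Decomp (x + y) := by
  obtain ⟨a, b, p, q, r, u, rfl⟩ := hx
  obtain ⟨a', b', p', q', r', u', rfl⟩ := hy
  refine ⟨a + a', b + b', p + p', q + q', r + r', u + u', ?_⟩
  rw [tA_add, tB_add, tC_add, tD_add, add_smul, add_smul]
  abel

lemma decomp_smul (c : k) {x : Halg k} (hx : Decomp x) : Decomp (c • x) := by
  obtain ⟨a, b, p, q, r, u, rfl⟩ := hx
  refine ⟨c * a, c * b, c • p, c • q, c • r, c • u, ?_⟩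
  rw [tA_smul, tB_smul, tC_smul, tD_smul, mul_smul, mul_smul]
  simp only [smul_add, smul_smul]

end Decomp

section MulLemmas

variable {k}

lemma s_mul_sw : sH k * (sH k * wH k) = -(sH k * wH k) := by
  rw [← mul_assoc, sH_mul_sH]
  exact neg_mul (sH k) (wH k)

lemma s_mul_tA (p : k[X]) : sH k * tA p = -(tA p) :=
  s_mul_aeval_mul sH_mul_sH p

lemma s_mul_tB (p : k[X]) : sH k * tB p = -(tB p) :=
  s_mul_aeval_mul s_mul_sw p

lemma s_mul_tC (p : k[X]) : sH k * tC p = tA (X * p) := by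
  rw [tC, ← mul_assoc, s_mul_aeval, tA, map_mul, aeval_X]
  calc aeval (sH k * wH k) p * sH k * (wH k * sH k)
      = (aeval (sH k * wH k) p * (sH k * wH k)) * sH k := by noncomm_ring
    _ = ((sH k * wH k) * aeval (sH k * wH k) p) * sH k := by rw [← aeval_comm_self]
    _ = sH k * wH k * aeval (sH k * wH k) p * sH k := rfl

lemma s_mul_tD (p : k[X]) : sH k * tD p = tB (X * p) := by
  rw [tD, ← mul_assoc, s_mul_aeval, tB, map_mul, aeval_X]
  calc aeval (sH k * wH k) p * sH k * (wH k * sH k * wH k)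
      = (aeval (sH k * wH k) p * (sH k * wH k)) * (sH k * wH k) := by noncomm_ring
    _ = ((sH k * wH k) * aeval (sH k * wH k) p) * (sH k * wH k) := by rw [← aeval_comm_self]
    _ = sH k * wH k * aeval (sH k * wH k) p * (sH k * wH k) := rfl

lemma w_mul_tA (p : k[X]) : wH k * tA p = tC p := by
  rw [tA, tC, ← mul_assoc, w_mul_aeval, mul_assoc]

lemma w_mul_tB (p : k[X]) : wH k * tB p = tD p := by
  rw [tB, tD, ← mul_assoc, w_mul_aeval, mul_assoc, ← mul_assoc (wH k)]

lemma w_mul_tC (p : k[X]) : wH k * tC p = tA p := by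
  rw [← w_mul_tA, ← mul_assoc, wH_mul_wH, one_mul]

lemma w_mul_tD (p : k[X]) : wH k * tD p = tB p := by
  rw [← w_mul_tB, ← mul_assoc, wH_mul_wH, one_mul]

lemma tA_C (a : k) : tA (C a) = a • sH k := by
  rw [tA, aeval_C, ← Algebra.smul_def]

lemma tB_C (a : k) : tB (C a) = a • (sH k * wH k) := by
  rw [tB, aeval_C, ← Algebra.smul_def]

lemma decomp_s_mul {x : Halg k} (hx : Decomp x) : Decomp (sH k * x) := by
  obtain ⟨a, b, p, q, r, u, rfl⟩ := hx
  refine ⟨0, 0, C a - p + X * r, C b - q + X * u, 0, 0, ?_⟩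
  rw [tA_add, tB_add]
  rw [show (C a - p : k[X]) = C a + -p by ring, show (C b - q : k[X]) = C b + -q by ring]
  rw [tA_add, tB_add, tA_C, tB_C]
  have hnA : tA (-p) = -(tA p) := by
    rw [show (-p : k[X]) = (-1 : k) • p by simp, tA_smul]
    exact neg_one_smul k (tA p)
  have hnB : tB (-q) = -(tB q) := by
    rw [show (-q : k[X]) = (-1 : k) • q by simp, tB_smul]
    exact neg_one_smul k (tB q)
  rw [hnA, hnB]
  simp only [mul_add, zero_smul, zero_add]
  rw [mul_smul_comm, mul_smul_comm, mul_one, s_mul_tA, s_mul_tB, s_mul_tC, s_mul_tD]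
  have h0A : tC (0 : k[X]) = 0 := by simp [tC]
  have h0B : tD (0 : k[X]) = 0 := by simp [tD]
  rw [h0A, h0B]
  abel

lemma decomp_w_mul {x : Halg k} (hx : Decomp x) : Decomp (wH k * x) := by
  obtain ⟨a, b, p, q, r, u, rfl⟩ := hx
  refine ⟨b, a, r, u, p, q, ?_⟩
  simp only [mul_add, mul_smul_comm, mul_one]
  rw [wH_mul_wH, w_mul_tA, w_mul_tB, w_mul_tC, w_mul_tD]
  abel

lemma decomp_all (x : Halg k) : Decomp x := by
  obtain ⟨y, rfl⟩ := RingQuot.mkAlgHom_surjective k (HRel k) x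
  have key : ∀ z : Halg k, Decomp z →
      Decomp (RingQuot.mkAlgHom k (HRel k) y * z) := by
    induction y using FreeAlgebra.induction with
    | grade0 c =>
        intro z hz
        rw [AlgHom.commutes, ← Algebra.smul_def]
        exact decomp_smul c hz
    | grade1 i =>
        intro z hz
        fin_cases i
        · exact decomp_s_mul hz
        · exact decomp_w_mul hz
    | mul y₁ y₂ h₁ h₂ =>
        intro z hz
        rw [map_mul, mul_assoc]
        exact h₁ _ (h₂ _ hz)
    | add y₁ y₂ h₁ h₂ =>
        intro z hz
        rw [map_add, add_mul]
        exact decomp_add (h₁ _ hz) (h₂ _ hz)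
  simpa using key 1 decomp_one

end MulLemmas

section Images

variable {k}

lemma rho_tA (p : k[X]) : rho (tA p) = p • SM k := by
  rw [tA, map_mul, ← aeval_algHom_apply, map_mul, rho_sH, rho_wH]
  exact aeval_mul_eq_smul SW_mul_S p

lemma rho_tB (p : k[X]) : rho (tB p) = p • (SM k * WM k) := by
  rw [tB, map_mul, ← aeval_algHom_apply, map_mul, rho_sH, rho_wH]
  exact aeval_mul_eq_smul SW_mul_SW p

lemma rho_tC (p : k[X]) : rho (tC p) = p • (WM k * SM k) := by
  rw [tC, map_mul, ← aeval_algHom_apply, map_mul, rho_sH, rho_wH]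
  exact aeval_mul_eq_smul WS_mul_WS p

lemma rho_tD (p : k[X]) : rho (tD p) = p • (WM k * SM k * WM k) := by
  rw [tD, map_mul, ← aeval_algHom_apply]
  simp only [map_mul, rho_sH, rho_wH]
  exact aeval_mul_eq_smul WS_mul_WSW p

end Images

section Coeffs

variable {k}

lemma X_sq_sub_one_ne : (X ^ 2 - 1 : k[X]) ≠ 0 := by
  have := Polynomial.X_pow_sub_C_ne_zero (R := k) (n := 2) (by norm_num) 1
  simpa using this

lemma coeffs_zero {a b : k} {p q r u : k[X]}
    (h : a • (1 : Matrix (Fin 2) (Fin 2) k[X]) + b • WM k + p • SM k + q • (SM k * WM k)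
      + r • (WM k * SM k) + u • (WM k * SM k * WM k) = 0) :
    a = 0 ∧ b = 0 ∧ p = 0 ∧ q = 0 ∧ r = 0 ∧ u = 0 := by
  rw [WSW_eq, SM_mul_WM, WM_mul_SM, ← Matrix.ext_iff] at h
  have E00 := h 0 0
  have E01 := h 0 1
  have E10 := h 1 0
  have E11 := h 1 1
  simp only [Matrix.add_apply, Matrix.smul_apply, Matrix.one_apply, Matrix.zero_apply,
    Matrix.cons_val', Matrix.cons_val_zero, Matrix.cons_val_one, Matrix.head_cons,
    Matrix.head_fin_const, Matrix.empty_val', Matrix.cons_val_fin_one, SM, WM,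
    Matrix.of_apply, smul_eq_mul, Polynomial.smul_eq_C_mul, if_true, if_false,
    Fin.isValue, one_ne_zero, zero_ne_one, ite_true, ite_false, mul_zero, mul_one,
    mul_neg, add_zero, zero_add, smul_zero] at E00 E01 E10 E11
  -- E00 : C a + C b * X + u * (X ^ 2 - 1) = 0 (roughly)
  have hu : u = 0 := by
    by_contra hu
    have heq : u * (X ^ 2 - C 1) = -(C a) - C b * X := by
      rw [map_one]; linear_combination E00
    have hd := congrArg natDegree heq
    rw [Polynomial.natDegree_mul hu (Polynomial.X_pow_sub_C_ne_zero (by norm_num) 1),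
      Polynomial.natDegree_X_pow_sub_C] at hd
    have hle : (-(C a) - C b * X).natDegree ≤ 1 := by
      apply le_trans (Polynomial.natDegree_sub_le _ _)
      simp only [Polynomial.natDegree_neg, Polynomial.natDegree_C, max_le_iff]
      exact ⟨Nat.zero_le 1, le_trans (Polynomial.natDegree_C_mul_le b X)
        (by simp [Polynomial.natDegree_X])⟩
    omega
  have hab : C a + C b * X = 0 := by rw [hu] at E00; linear_combination E00
  have ha : a = 0 := by
    have := congrArg (fun f => Polynomial.coeff f 0) hab
    simpa using this
  have hb : b = 0 := by
    have := congrArg (fun f => Polynomial.coeff f 1) hab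
    simpa using this
  have hr : r = 0 := by
    have h2 : r * (X ^ 2 - 1) = 0 := by
      rw [hb, hu] at E01; simp only [map_zero] at E01; linear_combination -E01
    rcases mul_eq_zero.mp h2 with h3 | h3
    · exact h3
    · exact absurd h3 X_sq_sub_one_ne
  have hq : q = 0 := by
    rw [hb, hu] at E10; simp only [map_zero] at E10; linear_combination E10
  have hp : p = 0 := by
    rw [ha, hb, hu, hq, hr] at E11; simp only [map_zero] at E11; linear_combination -E11
  exact ⟨ha, hb, hp, hq, hr, hu⟩

end Coeffs

section Final

variable {k}

lemma rho_injective : Function.Injective (rho : Halg k →ₐ[k] _) := by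
  rw [injective_iff_map_eq_zero]
  intro x hx
  obtain ⟨a, b, p, q, r, u, rfl⟩ := decomp_all x
  rw [map_add, map_add, map_add, map_add, map_add, map_smul, map_smul, map_one,
    rho_wH, rho_tA, rho_tB, rho_tC, rho_tD] at hx
  obtain ⟨ha, hb, hp, hq, hr, hu⟩ := coeffs_zero hx
  rw [ha, hb, hp, hq, hr, hu]
  simp [tA, tB, tC, tD]

/-- The central element mapping to `X • 1`. -/
noncomputable def zH : Halg k := wH k + sH k * wH k + wH k * sH k

lemma rho_zH : rho (zH : Halg k) = (X : k[X]) • 1 := by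
  rw [zH, map_add, map_add, map_mul, map_mul, rho_sH, rho_wH]
  exact W_add_SW_add_WS

lemma rho_aeval_zH (p : k[X]) : rho (aeval (zH : Halg k) p) = p • 1 := by
  rw [← aeval_algHom_apply, rho_zH]
  have h1 : (X : k[X]) • (1 : Matrix (Fin 2) (Fin 2) k[X])
      = (IsScalarTower.toAlgHom k k[X] (Matrix (Fin 2) (Fin 2) k[X])) X := by
    simp [Algebra.algebraMap_eq_smul_one]
  rw [h1, aeval_algHom_apply, aeval_X_left_apply]
  simp [Algebra.algebraMap_eq_smul_one]

lemma comm_scalar {m : Matrix (Fin 2) (Fin 2) k[X]}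
    (hS : m * SM k = SM k * m) (hW : m * WM k = WM k * m) :
    m = m 0 0 • 1 := by
  rw [← Matrix.ext_iff] at hS hW
  have h01 : m 0 1 = 0 := by
    have := hS 0 1
    simp [SM, Matrix.mul_apply, Fin.sum_univ_two] at this
    exact this
  have h10 : m 1 0 = 0 := by
    have := hS 1 0
    simp [SM, Matrix.mul_apply, Fin.sum_univ_two] at this
    exact this
  have h11 : m 1 1 = m 0 0 := by
    have := hW 1 0
    simp [WM, Matrix.mul_apply, Fin.sum_univ_two, h10] at this
    exact this
  ext i j : 2
  fin_cases i <;> fin_cases j <;>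
    simp [Matrix.smul_apply, Matrix.one_apply, h01, h10, h11, smul_eq_mul]

theorem stmt_13' :
    ∃ ρ : Halg k →ₐ[k] Matrix (Fin 2) (Fin 2) (Polynomial k),
      ρ (sH k) = !![0, 0; 0, -1] ∧
      ρ (wH k) = !![(X : Polynomial k), X ^ 2 - 1; -1, -X] ∧
      Function.Injective ρ ∧
      {m : Matrix (Fin 2) (Fin 2) (Polynomial k) |
          m ∈ Set.range ρ ∧ ∀ y ∈ Set.range ρ, m * y = y * m} =
        {m : Matrix (Fin 2) (Fin 2) (Polynomial k) |
          ∃ p : Polynomial k, m = p • (1 : Matrix (Fin 2) (Fin 2) (Polynomial k))} ∧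
      Nonempty (Subalgebra.center k (Halg k) ≃ₐ[k] Polynomial k) := by
  refine ⟨rho, rho_sH, rho_wH, rho_injective, ?_, ?_⟩
  · ext m
    simp only [Set.mem_setOf_eq]
    constructor
    · rintro ⟨⟨x, rfl⟩, hcomm⟩
      have hS : rho x * SM k = SM k * rho x := hcomm (SM k) ⟨sH k, rho_sH⟩
      have hW : rho x * WM k = WM k * rho x := hcomm (WM k) ⟨wH k, rho_wH⟩
      exact ⟨rho x 0 0, comm_scalar hS hW⟩
    · rintro ⟨p, rfl⟩
      refine ⟨⟨aeval (zH : Halg k) p, rho_aeval_zH p⟩, ?_⟩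
      intro y _
      rw [smul_mul_assoc, one_mul, mul_smul_comm, mul_one]
  · have hζinj : Function.Injective (aeval (zH : Halg k) : k[X] →ₐ[k] Halg k) := by
      intro p q hpq
      have h2 := congrArg rho hpq
      rw [rho_aeval_zH, rho_aeval_zH, ← Matrix.ext_iff] at h2
      have := h2 0 0
      simpa [Matrix.smul_apply, Matrix.one_apply, smul_eq_mul] using this
    have hrange : (aeval (zH : Halg k) : k[X] →ₐ[k] Halg k).range
        = Subalgebra.center k (Halg k) := by
      ext z
      constructor
      · rintro ⟨p, rfl⟩
        rw [Subalgebra.mem_center_iff]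
        intro y
        apply rho_injective
        simp only [AlgHom.toRingHom_eq_coe, RingHom.coe_coe]
        rw [map_mul, map_mul, rho_aeval_zH, smul_mul_assoc, one_mul, mul_smul_comm, mul_one]
      · intro hz
        rw [Subalgebra.mem_center_iff] at hz
        have hS : rho z * SM k = SM k * rho z := by
          rw [← rho_sH, ← map_mul, ← map_mul, hz (sH k)]
        have hW : rho z * WM k = WM k * rho z := by
          rw [← rho_wH, ← map_mul, ← map_mul, hz (wH k)]
        refine ⟨rho z 0 0, rho_injective ?_⟩
        simp only [AlgHom.toRingHom_eq_coe, RingHom.coe_coe]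
        rw [rho_aeval_zH]
        exact (comm_scalar hS hW).symm
    exact ⟨((AlgEquiv.ofInjective _ hζinj).trans (Subalgebra.equivOfEq _ _ hrange)).symm⟩

end Final

theorem stmt_13 :
    ∃ ρ : Halg k →ₐ[k] Matrix (Fin 2) (Fin 2) (Polynomial k),
      ρ (sH k) = !![0, 0; 0, -1] ∧
      ρ (wH k) = !![(X : Polynomial k), X ^ 2 - 1; -1, -X] ∧
      Function.Injective ρ ∧
      {m : Matrix (Fin 2) (Fin 2) (Polynomial k) |
          m ∈ Set.range ρ ∧ ∀ y ∈ Set.range ρ, m * y = y * m} =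
        {m : Matrix (Fin 2) (Fin 2) (Polynomial k) |
          ∃ p : Polynomial k, m = p • (1 : Matrix (Fin 2) (Fin 2) (Polynomial k))} ∧
      Nonempty (Subalgebra.center k (Halg k) ≃ₐ[k] Polynomial k) :=
  stmt_13'
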